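/- Let both the valuation space and the bid space 𝓑 equal the set of gross substitutes (GS) valuations, and consider the VCG mechanism. Then for every γ ≥ 0, every profile v = (v_1, …, v_n) of GS valuations, and every pure Nash equilibrium b for v in which each bid b_i has exposure factor γ, it holds that (2 + γ) · ∑_i v_i(X_i(b)) ≥ OPT(v). In other words, for the VCG mechanism with GS valuations, PoA_γ ≤ 2 + γ. -/

import Mathlib

open Finset

/-- A valuation on `m` items: normalized at `∅`, monotone, nonnegative. -/
def IsValuation {m : ℕ} (v : Finset (Fin m) → ℝ) : Prop :=
  v ∅ = 0 ∧ (∀ S T : Finset (Fin m), S ⊆ T → v S ≤ v T) ∧ (∀ S, 0 ≤ v S)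

/-- `S` is in the demand set of valuation `v` at prices `p`. -/
def InDemand {m : ℕ} (v : Finset (Fin m) → ℝ) (p : Fin m → ℝ) (S : Finset (Fin m)) : Prop :=
  ∀ T : Finset (Fin m), v T - ∑ j ∈ T, p j ≤ v S - ∑ j ∈ S, p j

/-- Gross substitutes valuations. -/
def IsGS {m : ℕ} (v : Finset (Fin m) → ℝ) : Prop :=
  IsValuation v ∧
    ∀ p q : Fin m → ℝ, (∀ j, p j ≤ q j) →
      ∀ S : Finset (Fin m), InDemand v p S →
        ∃ T : Finset (Fin m), InDemand v q T ∧ ∀ j ∈ S, p j = q j → j ∈ T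

/-- Additive valuations. -/
def IsAdditive {m : ℕ} (v : Finset (Fin m) → ℝ) : Prop :=
  ∃ w : Fin m → ℝ, (∀ j, 0 ≤ w j) ∧ ∀ S : Finset (Fin m), v S = ∑ j ∈ S, w j

/-- XOS valuations: a max over a nonempty finite family of nonnegative additive valuations. -/
def IsXOS {m : ℕ} (v : Finset (Fin m) → ℝ) : Prop :=
  ∃ (k : ℕ) (w : Fin (k + 1) → Fin m → ℝ),
    (∀ i j, 0 ≤ w i j) ∧
    ∀ S : Finset (Fin m),
      v S = Finset.univ.sup' Finset.univ_nonempty (fun i => ∑ j ∈ S, w i j)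

def GSvals (m : ℕ) : Set (Finset (Fin m) → ℝ) := {u | IsGS u}
def XOSvals (m : ℕ) : Set (Finset (Fin m) → ℝ) := {u | IsXOS u}

/-- The welfare `W^b(S)`: the maximum of `∑ i, b i (X i)` over allocations (pairwise disjoint
tuples of subsets) contained in `S`. -/
noncomputable def W {n m : ℕ} (b : Fin n → Finset (Fin m) → ℝ) (S : Finset (Fin m)) : ℝ :=
  sSup {t : ℝ | ∃ X : Fin n → Finset (Fin m),
    (∀ i j : Fin n, i ≠ j → Disjoint (X i) (X j)) ∧ (∀ i, X i ⊆ S) ∧ t = ∑ i, b i (X i)}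

/-- The welfare `W^{b₋ᵢ}(S)` with agent `i` omitted. -/
noncomputable def Wminus {n m : ℕ} (b : Fin n → Finset (Fin m) → ℝ) (i : Fin n)
    (S : Finset (Fin m)) : ℝ :=
  sSup {t : ℝ | ∃ X : Fin n → Finset (Fin m),
    (∀ k l : Fin n, k ≠ l → Disjoint (X k) (X l)) ∧ (∀ k, X k ⊆ S) ∧
    t = ∑ k ∈ Finset.univ.erase i, b k (X k)}

/-- The welfare `W^b(x)` for a multiplicity vector `x : Fin m → ℕ`: maximum of `∑ i, b i (X i)`
over tuples of sets in which each item `j` is used at most `x j` times. -/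
noncomputable def Wmult {n m : ℕ} (b : Fin n → Finset (Fin m) → ℝ) (x : Fin m → ℕ) : ℝ :=
  sSup {t : ℝ | ∃ X : Fin n → Finset (Fin m),
    (∀ j : Fin m, (Finset.univ.filter fun i => j ∈ X i).card ≤ x j) ∧ t = ∑ i, b i (X i)}

/-- The optimal welfare for the true valuations. -/
noncomputable def OPT {n m : ℕ} (v : Fin n → Finset (Fin m) → ℝ) : ℝ := W v Finset.univ

/-- A mechanism: allocation and payment maps on bid profiles. -/
structure Mechanism (n m : ℕ) where
  alloc : (Fin n → Finset (Fin m) → ℝ) → Fin n → Finset (Fin m)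
  pay : (Fin n → Finset (Fin m) → ℝ) → Fin n → ℝ

/-- A bid profile lies in the bid space `B`. -/
def InBidSpace {n m : ℕ} (B : Set (Finset (Fin m) → ℝ))
    (b : Fin n → Finset (Fin m) → ℝ) : Prop :=
  ∀ i, b i ∈ B

/-- On bid profiles from `B`, the allocation is pairwise disjoint. -/
def AllocDisjoint {n m : ℕ} (M : Mechanism n m) (B : Set (Finset (Fin m) → ℝ)) : Prop :=
  ∀ b, InBidSpace B b → ∀ i j : Fin n, i ≠ j → Disjoint (M.alloc b i) (M.alloc b j)

/-- On bid profiles from `B`, payments are nonnegative. -/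
def PayNonneg {n m : ℕ} (M : Mechanism n m) (B : Set (Finset (Fin m) → ℝ)) : Prop :=
  ∀ b, InBidSpace B b → ∀ i, 0 ≤ M.pay b i

/-- The utility of agent `i` with true valuation `v` under bid profile `b`. -/
noncomputable def util {n m : ℕ} (M : Mechanism n m) (v : Finset (Fin m) → ℝ) (i : Fin n)
    (b : Fin n → Finset (Fin m) → ℝ) : ℝ :=
  v (M.alloc b i) - M.pay b i

/-- Declared welfare maximizer. -/
def IsDWM {n m : ℕ} (M : Mechanism n m) (B : Set (Finset (Fin m) → ℝ)) : Prop :=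
  (∀ b, InBidSpace B b → ∑ i, b i (M.alloc b i) = W b Finset.univ) ∧
  (∀ b, InBidSpace B b → ∀ i, M.pay b i ≤ b i (M.alloc b i)) ∧
  (∀ b, InBidSpace B b → ∀ i : Fin n, ∃ b' : Fin n → Finset (Fin m) → ℝ,
    InBidSpace B b' ∧ b' i = b i ∧ M.alloc b' i = M.alloc b i ∧
    M.pay b' i = b i (M.alloc b i))

/-- English Walrasian mechanism: welfare-maximizing allocation w.r.t. the bids, with
payments given by the minimum Walrasian prices `W^b(𝟙 + e_j) − W^b(𝟙)`. -/
def IsEnglish {n m : ℕ} (M : Mechanism n m) (B : Set (Finset (Fin m) → ℝ)) : Prop :=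
  (∀ b, InBidSpace B b → ∑ i, b i (M.alloc b i) = W b Finset.univ) ∧
  (∀ b, InBidSpace B b → ∀ i, M.pay b i =
    ∑ j ∈ M.alloc b i,
      (Wmult b (fun k => if k = j then 2 else 1) - Wmult b (fun _ => 1)))

/-- VCG mechanism: welfare-maximizing allocation w.r.t. the bids, with externality payments. -/
def IsVCG {n m : ℕ} (M : Mechanism n m) (B : Set (Finset (Fin m) → ℝ)) : Prop :=
  (∀ b, InBidSpace B b → ∑ i, b i (M.alloc b i) = W b Finset.univ) ∧
  (∀ b, InBidSpace B b → ∀ i, M.pay b i =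
    Wminus b i Finset.univ - Wminus b i (Finset.univ \ M.alloc b i))

/-- Bid `bi` of agent `i` with true valuation `v` has exposure factor `γ`. -/
def HasExposureFactor {n m : ℕ} (M : Mechanism n m) (B : Set (Finset (Fin m) → ℝ))
    (v : Finset (Fin m) → ℝ) (i : Fin n) (bi : Finset (Fin m) → ℝ) (γ : ℝ) : Prop :=
  ∀ b : Fin n → Finset (Fin m) → ℝ, InBidSpace B b → b i = bi →
    M.pay b i ≤ (1 + γ) * v (M.alloc b i)

/-- `b` is a pure Nash equilibrium for true valuations `v`. -/
noncomputable def IsNash {n m : ℕ} (M : Mechanism n m) (B : Set (Finset (Fin m) → ℝ))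
    (v b : Fin n → Finset (Fin m) → ℝ) : Prop :=
  InBidSpace B b ∧
  ∀ i : Fin n, ∀ bi' ∈ B, util M (v i) i (Function.update b i bi') ≤ util M (v i) i b

/-- A finitely supported probability distribution. -/
structure FinDist (α : Type*) where
  supp : Finset α
  μ : α → ℝ
  nonneg : ∀ a, 0 ≤ μ a
  sum_one : ∑ a ∈ supp, μ a = 1

/-- Expectation of `f` under a finitely supported distribution. -/
noncomputable def FinDist.exp {α : Type*} (D : FinDist α) (f : α → ℝ) : ℝ :=
  ∑ a ∈ D.supp, D.μ a * f a

/-- Bayes-Nash equilibrium: strategies map types in `V` to bids in `B`, and no unilateral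
deviation (depending only on the agent's own type) improves expected utility. -/
noncomputable def IsBNE {n m : ℕ} (M : Mechanism n m) (V B : Set (Finset (Fin m) → ℝ))
    (D : FinDist (Fin n → Finset (Fin m) → ℝ))
    (s : Fin n → (Finset (Fin m) → ℝ) → Finset (Fin m) → ℝ) : Prop :=
  (∀ i : Fin n, ∀ vi ∈ V, s i vi ∈ B) ∧
  ∀ i : Fin n, ∀ s' : (Finset (Fin m) → ℝ) → Finset (Fin m) → ℝ, (∀ vi ∈ V, s' vi ∈ B) →
    D.exp (fun v => util M (v i) i (Function.update (fun k => s k (v k)) i (s' (v i)))) ≤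
    D.exp (fun v => util M (v i) i (fun k => s k (v k)))

/-- Strategy `si` of agent `i` has exposure factor `γ` under distribution `D`. -/
noncomputable def BayesExposure {n m : ℕ} (M : Mechanism n m)
    (V B : Set (Finset (Fin m) → ℝ)) (D : FinDist (Fin n → Finset (Fin m) → ℝ)) (i : Fin n)
    (si : (Finset (Fin m) → ℝ) → Finset (Fin m) → ℝ) (γ : ℝ) : Prop :=
  ∀ c : (Finset (Fin m) → ℝ) → Fin n → Finset (Fin m) → ℝ,
    (∀ vi ∈ V, InBidSpace B (c vi) ∧ c vi i = si vi) →
    D.exp (fun v => M.pay (c (v i)) i) ≤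
      (1 + γ) * D.exp (fun v => (v i) (M.alloc (c (v i)) i))

/-!
Fix an optimal allocation `Y` and the equilibrium allocation `X = M.alloc b`. Deviating to an
additive bid that values every item of a bundle `S` above the others' whole declared welfare, agent
`i` wins a superset of `S` and pays at most the externality of `S`; so in equilibrium the marginal
value of an item `j` to `X i` is at most its marginal externality, which is at most
`removalLoss b X j`, the loss in declared welfare when `j` is taken from its holder. Gross
substitutes valuations are submodular, hence
`v i (Y i) ≤ v i (X i) + ∑ j ∈ Y i \ X i, removalLoss b X j`, and since the `Y i` are disjoint,
`OPT ≤ SW + ∑ k, ∑ j ∈ X k, (b k (X k) - b k (X k \ {j}))`. Under gross substitutes `X k` is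
demanded for `b k` at exactly these marginal prices, and facing a rival who bids slightly less
than them, agent `k` is charged nearly their sum; the exposure factor bounds it by
`(1 + γ) v k (X k)`. With a single agent all externalities vanish and `OPT ≤ SW` directly.
-/

open Function

section Demand

variable {m : ℕ} {v : Finset (Fin m) → ℝ} {p : Fin m → ℝ} {S T : Finset (Fin m)}

lemma IsValuation.monotone (hv : IsValuation v) : Monotone v := fun S T h => hv.2.1 S T h

lemma IsValuation.nonneg (hv : IsValuation v) (S : Finset (Fin m)) : 0 ≤ v S := hv.2.2 S

lemma exists_inDemand (v : Finset (Fin m) → ℝ) (p : Fin m → ℝ) : ∃ S, InDemand v p S := by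
  obtain ⟨S, -, hS⟩ := exists_max_image univ (fun S => v S - ∑ j ∈ S, p j) univ_nonempty
  exact ⟨S, fun T => hS T (mem_univ T)⟩

lemma InDemand.price_le (hS : InDemand v p S) {j : Fin m} (hj : j ∈ S) :
    p j ≤ v S - v (S.erase j) := by
  have := hS (S.erase j)
  linarith [sum_erase_add S p hj]

lemma InDemand.subset_of_lt_price (hv : IsValuation v) {B : Finset (Fin m)}
    (hB : ∀ j ∉ B, v univ < p j) (hS : InDemand v p S) : S ⊆ B := by
  intro j hjS
  by_contra hjB
  linarith [hS.price_le hjS, hB j hjB, hv.monotone (subset_univ S), hv.nonneg (S.erase j)]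

end Demand

section Additive

variable {m : ℕ} {w p : Fin m → ℝ}

def addVal (w : Fin m → ℝ) (S : Finset (Fin m)) : ℝ := ∑ j ∈ S, w j

lemma inDemand_addVal {T : Finset (Fin m)} (hlt : ∀ j, p j < w j → j ∈ T)
    (hle : ∀ j ∈ T, p j ≤ w j) : InDemand (addVal w) p T := by
  intro R
  have hsurplus : ∀ S, addVal w S - ∑ j ∈ S, p j = ∑ j ∈ S, (w j - p j) := fun S => by
    simp only [addVal, sum_sub_distrib]
  rw [hsurplus, hsurplus, ← sum_inter_add_sum_sdiff R T]
  have hout : ∑ j ∈ R \ T, (w j - p j) ≤ 0 :=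
    sum_nonpos fun j hj => by
      have := mt (hlt j) (mem_sdiff.1 hj).2
      linarith
  have hin : ∑ j ∈ R ∩ T, (w j - p j) ≤ ∑ j ∈ T, (w j - p j) :=
    sum_le_sum_of_subset_of_nonneg inter_subset_right fun j hj _ => by linarith [hle j hj]
  linarith

lemma isGS_addVal (hw : 0 ≤ w) : IsGS (addVal w) := by
  refine ⟨⟨by simp [addVal], fun S T h => sum_le_sum_of_subset_of_nonneg h fun j _ _ => hw j,
    fun S => sum_nonneg fun j _ => hw j⟩, fun p q hpq S hS => ?_⟩
  refine ⟨univ.filter fun j => q j < w j ∨ (j ∈ S ∧ p j = q j), inDemand_addVal ?_ ?_, ?_⟩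
  · exact fun j hj => mem_filter.2 ⟨mem_univ j, Or.inl hj⟩
  · intro j hj
    rcases (mem_filter.1 hj).2 with h | ⟨hjS, hpq⟩
    · exact h.le
    · have := hS.price_le hjS
      simp only [addVal] at this
      linarith [sum_erase_add S w hjS]
  · exact fun j hjS hpq => mem_filter.2 ⟨mem_univ j, Or.inr ⟨hjS, hpq⟩⟩

lemma isGS_zero : IsGS (0 : Finset (Fin m) → ℝ) := by
  have h : addVal (0 : Fin m → ℝ) = 0 := funext fun S => by simp [addVal]
  exact h ▸ isGS_addVal le_rfl

end Additive

section GrossSubstitutes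

variable {m : ℕ} {v : Finset (Fin m) → ℝ}

def stepPrice (Z : Finset (Fin m)) (j : Fin m) (t H : ℝ) (l : Fin m) : ℝ :=
  if l = j then t else if l ∈ Z then 0 else H

variable {Z S : Finset (Fin m)} {j : Fin m} {t H : ℝ}

lemma sum_stepPrice (hS : S ⊆ insert j Z) :
    ∑ l ∈ S, stepPrice Z j t H l = if j ∈ S then t else 0 := by
  rw [← sum_ite_eq' S j fun _ => t]
  refine sum_congr rfl fun l hl => ?_
  by_cases hlj : l = j
  · simp [stepPrice, hlj]
  · simp [stepPrice, hlj, (mem_insert.1 (hS hl)).resolve_left hlj]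

lemma InDemand.subset_insert_of_stepPrice (hv : IsValuation v) (hH : v univ < H)
    (hS : InDemand v (stepPrice Z j t H) S) : S ⊆ insert j Z :=
  hS.subset_of_lt_price hv fun l hl => by
    rw [mem_insert, not_or] at hl
    simpa [stepPrice, hl.1, hl.2] using hH

lemma InDemand.mem_of_lt_marginal (hv : Monotone v) (ht : t < v (insert j Z) - v Z)
    (hS : InDemand v (stepPrice Z j t H) S) (hSZ : S ⊆ insert j Z) : j ∈ S := by
  by_contra hjS
  have hSZ' : S ⊆ Z := fun l hl =>
    (mem_insert.1 (hSZ hl)).resolve_left fun h => hjS (h ▸ hl)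
  have := hS (insert j Z)
  rw [sum_stepPrice subset_rfl, sum_stepPrice hSZ, if_pos (mem_insert_self j Z),
    if_neg hjS] at this
  linarith [hv hSZ']

lemma InDemand.notMem_of_marginal_lt (hv : Monotone v) (hjZ : j ∉ Z)
    (ht : v (insert j Z) - v Z < t) (hS : InDemand v (stepPrice Z j t H) S)
    (hSZ : S ⊆ insert j Z) : j ∉ S := by
  intro hjS
  have := hS Z
  rw [sum_stepPrice (subset_insert j Z), sum_stepPrice hSZ, if_neg hjZ, if_pos hjS] at this
  linarith [hv hSZ]

lemma IsGS.marginal_insert_le (hv : IsGS v) {A : Finset (Fin m)} {j₁ j₂ : Fin m}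
    (h₁ : j₁ ∉ A) :
    v (insert j₁ (insert j₂ A)) - v (insert j₂ A) ≤ v (insert j₁ A) - v A := by
  by_contra! hlt
  obtain ⟨t, ht₁, ht₂⟩ := exists_between hlt
  set H := v univ + 1
  have hH : v univ < H := by linarith
  have hH₀ : 0 ≤ H := by linarith [hv.1.nonneg univ]
  -- at prices `t` on `j₁` and `0` on `A ∪ {j₂}`, the item `j₁` is demanded; raising the
  -- price of `j₂` to `H` must keep it demanded, but `j₁` alone is worth less than `t`
  obtain ⟨S, hS⟩ := exists_inDemand v (stepPrice (insert j₂ A) j₁ t H)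
  have hj₁S : j₁ ∈ S := hS.mem_of_lt_marginal hv.1.monotone ht₂
    (hS.subset_insert_of_stepPrice hv.1 hH)
  have hpq : ∀ l, stepPrice (insert j₂ A) j₁ t H l ≤ stepPrice A j₁ t H l := fun l => by
    unfold stepPrice
    split_ifs <;> simp_all
  obtain ⟨T, hT, hST⟩ := hv.2 _ _ hpq S hS
  exact hT.notMem_of_marginal_lt hv.1.monotone h₁ ht₁
    (hT.subset_insert_of_stepPrice hv.1 hH) (hST j₁ hj₁S (by simp [stepPrice]))

lemma IsGS.marginal_anti (hv : IsGS v) {B' B : Finset (Fin m)} (hBB : B' ⊆ B) (hj : j ∉ B) :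
    v (insert j B) - v B ≤ v (insert j B') - v B' := by
  obtain ⟨D, rfl⟩ : ∃ D, B = B' ∪ D := ⟨B \ B', (union_sdiff_of_subset hBB).symm⟩
  clear hBB
  induction D using Finset.induction_on with
  | empty => simp
  | insert a D _ ih =>
    rw [union_insert] at hj ⊢
    have hjD : j ∉ B' ∪ D := fun h => hj (mem_insert_of_mem h)
    linarith [hv.marginal_insert_le hjD (j₂ := a), ih hjD]

lemma IsGS.le_add_sum_marginal (hv : IsGS v) (B C : Finset (Fin m)) :
    v (B ∪ C) ≤ v B + ∑ j ∈ C \ B, (v (insert j B) - v B) := by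
  induction C using Finset.induction_on with
  | empty => simp
  | insert a C haC ih =>
    by_cases haB : a ∈ B
    · rwa [union_insert, insert_eq_of_mem (mem_union_left C haB), insert_sdiff_of_mem C haB]
    · rw [union_insert, insert_sdiff_of_notMem C haB,
        sum_insert fun h => haC (mem_sdiff.1 h).1]
      have hstep := hv.marginal_anti (B := B ∪ C) subset_union_left (j := a) (by simp [haB, haC])
      linarith

lemma IsGS.sum_marginal_le (hv : IsGS v) {A D : Finset (Fin m)} (hD : D ⊆ A) :
    ∑ j ∈ D, (v A - v (A.erase j)) ≤ v A - v (A \ D) := by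
  induction D using Finset.induction_on with
  | empty => simp
  | insert a D haD ih =>
    obtain ⟨haA, hDA⟩ := insert_subset_iff.1 hD
    have haAD : a ∈ A \ D := mem_sdiff.2 ⟨haA, haD⟩
    have hsub : (A \ D).erase a ⊆ A.erase a := erase_subset_erase a sdiff_subset
    have hmarg := hv.marginal_anti hsub (notMem_erase a A)
    rw [insert_erase haA, insert_erase haAD] at hmarg
    rw [sum_insert haD, sdiff_insert]
    linarith [ih hDA]

lemma IsGS.inDemand_marginalPrice (hv : IsGS v) (A : Finset (Fin m)) :
    InDemand v (fun j => if j ∈ A then v A - v (A.erase j) else v univ + 1) A := by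
  set p : Fin m → ℝ := fun j => if j ∈ A then v A - v (A.erase j) else v univ + 1
  have hsub : ∀ T ⊆ A, v T - ∑ j ∈ T, p j ≤ v A - ∑ j ∈ A, p j := fun T hT => by
    have hrem := hv.sum_marginal_le (sdiff_subset (s := A) (t := T))
    rw [Finset.sdiff_sdiff_eq_self hT] at hrem
    rw [← sum_sdiff hT, sum_congr rfl fun j hj => if_pos (mem_sdiff.1 hj).1]
    linarith
  intro T
  refine le_trans ?_ (hsub (T ∩ A) inter_subset_right)
  have hexp := hv.le_add_sum_marginal (T ∩ A) T
  rw [union_eq_right.2 inter_subset_left, sdiff_inter_self_left] at hexp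
  have hcheap : ∑ j ∈ T \ A, (v (insert j (T ∩ A)) - v (T ∩ A)) ≤ ∑ j ∈ T \ A, p j :=
    sum_le_sum fun j hj => by
      simp only [p, if_neg (mem_sdiff.1 hj).2]
      linarith [hv.1.monotone (subset_univ (insert j (T ∩ A))), hv.1.nonneg (T ∩ A)]
  linarith [sum_inter_add_sum_sdiff T A p]

end GrossSubstitutes

section Welfare

variable {n m : ℕ} {b : Fin n → Finset (Fin m) → ℝ} {i : Fin n} {S T : Finset (Fin m)}
  {X : Fin n → Finset (Fin m)}

lemma finite_setOf_exists_eq {α : Type*} [Finite α] (P Q : α → Prop) (f : α → ℝ) :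
    {t : ℝ | ∃ x, P x ∧ Q x ∧ t = f x}.Finite :=
  (Set.finite_range f).subset fun _ ⟨x, _, _, hx⟩ => ⟨x, hx.symm⟩

lemma le_W (hX : Pairwise (Disjoint on X)) (hXS : ∀ k, X k ⊆ S) : ∑ k, b k (X k) ≤ W b S :=
  le_csSup (finite_setOf_exists_eq _ _ _).bddAbove ⟨X, hX, hXS, rfl⟩

lemma exists_W (b : Fin n → Finset (Fin m) → ℝ) (S : Finset (Fin m)) :
    ∃ X : Fin n → Finset (Fin m),
      Pairwise (Disjoint on X) ∧ (∀ k, X k ⊆ S) ∧ W b S = ∑ k, b k (X k) := by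
  obtain ⟨X, hX, hXS, h⟩ : W b S ∈ _ :=
    Set.Nonempty.csSup_mem ⟨_, fun _ => ∅, by simp, by simp, rfl⟩
      (finite_setOf_exists_eq _ _ _)
  exact ⟨X, hX, hXS, h⟩

lemma le_Wminus (hX : Pairwise (Disjoint on X)) (hXS : ∀ k ≠ i, X k ⊆ S) :
    ∑ k ∈ univ.erase i, b k (X k) ≤ Wminus b i S := by
  have hsub : ∀ k, update X i ∅ k ⊆ X k := fun k => by
    rcases eq_or_ne k i with rfl | hk <;> simp [*]
  refine le_csSup (finite_setOf_exists_eq _ _ _).bddAbove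
    ⟨update X i ∅, fun k l hkl => (hX hkl).mono (hsub k) (hsub l), fun k => ?_,
      sum_congr rfl fun k hk => by rw [update_of_ne (ne_of_mem_erase hk)]⟩
  rcases eq_or_ne k i with rfl | hk
  · simp
  · simpa [hk] using hXS k hk

lemma Wminus_le {c : ℝ}
    (h : ∀ X : Fin n → Finset (Fin m), Pairwise (Disjoint on X) → (∀ k, X k ⊆ S) →
      ∑ k ∈ univ.erase i, b k (X k) ≤ c) :
    Wminus b i S ≤ c :=
  csSup_le ⟨_, fun _ => ∅, by simp, by simp, rfl⟩ fun _ ⟨X, hX, hXS, ht⟩ =>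
    ht ▸ h X hX hXS

lemma Wminus_nonneg (hb : ∀ k S, 0 ≤ b k S) : 0 ≤ Wminus b i S :=
  (sum_nonneg fun k _ => hb k ∅).trans
    (le_Wminus (X := fun _ => ∅) (fun _ _ _ => disjoint_empty_left _) fun _ _ => empty_subset S)

lemma Wminus_mono (hST : S ⊆ T) : Wminus b i S ≤ Wminus b i T :=
  Wminus_le fun _ hX hXS => le_Wminus hX fun k _ => (hXS k).trans hST

lemma Wminus_update (w : Finset (Fin m) → ℝ) :
    Wminus (update b i w) i S = Wminus b i S := by
  have h : ∀ X : Fin n → Finset (Fin m),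
      ∑ k ∈ univ.erase i, update b i w k (X k) = ∑ k ∈ univ.erase i, b k (X k) :=
    fun X => sum_congr rfl fun k hk => by rw [update_of_ne (ne_of_mem_erase hk)]
  simp only [Wminus, h]

lemma Wminus_of_subsingleton [Subsingleton (Fin n)] : Wminus b i S = 0 := by
  have hi : univ.erase i = ∅ :=
    eq_empty_of_forall_notMem fun k hk => ne_of_mem_erase hk (Subsingleton.elim k i)
  refine le_antisymm (Wminus_le fun _ _ _ => by simp [hi]) ?_
  simpa [hi] using le_Wminus (b := b) (i := i) (S := S) (X := fun _ => ∅)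
    (fun _ _ _ => disjoint_empty_left _) fun _ _ => empty_subset S

lemma add_Wminus_compl_le_W : b i S + Wminus b i (univ \ S) ≤ W b univ := by
  rw [← le_sub_iff_add_le']
  refine Wminus_le fun Y hY hYS => ?_
  have hdisj : ∀ k ≠ i, Disjoint S (Y k) := fun k _ =>
    disjoint_left.2 fun _ hj hjY => (mem_sdiff.1 (hYS k hjY)).2 hj
  have hZ : Pairwise (Disjoint on update Y i S) := fun k l hkl => by
    simp only [onFun, update_apply]
    split_ifs with hk hl hl
    · exact absurd (hk.trans hl.symm) hkl
    · exact hdisj l hl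
    · exact (hdisj k hk).symm
    · exact hY hkl
  have hW := le_W (b := b) hZ fun _ => subset_univ _
  rw [← add_sum_erase _ _ (mem_univ i), update_self,
    sum_congr rfl fun k hk => by rw [update_of_ne (ne_of_mem_erase hk)]] at hW
  linarith

lemma Wminus_compl_eq_of_maximal (hX : Pairwise (Disjoint on X))
    (hmax : ∑ k, b k (X k) = W b univ) (i : Fin n) :
    Wminus b i (univ \ X i) = ∑ k ∈ univ.erase i, b k (X k) := by
  refine le_antisymm ?_ (le_Wminus hX fun k hk => subset_sdiff.2 ⟨subset_univ _, hX hk⟩)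
  have := add_Wminus_compl_le_W (b := b) (i := i) (S := X i)
  rw [← hmax, ← add_sum_erase _ _ (mem_univ i)] at this
  linarith

lemma add_Wminus_compl_le_of_maximal (hX : Pairwise (Disjoint on X))
    (hmax : ∑ k, b k (X k) = W b univ) (i : Fin n) (S : Finset (Fin m)) :
    b i S + Wminus b i (univ \ S) ≤ b i (X i) + Wminus b i (univ \ X i) := by
  rw [Wminus_compl_eq_of_maximal hX hmax, add_sum_erase _ (fun k => b k (X k)) (mem_univ i), hmax]
  exact add_Wminus_compl_le_W

end Welfare

lemma le_of_forall_lt_one_mul_le_real {x y : ℝ} (h : ∀ t, 0 ≤ t → t < 1 → t * x ≤ y) :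
    x ≤ y := by
  have hlim : Filter.Tendsto (fun t : ℝ => t * x) (nhdsWithin 1 (Set.Iio 1)) (nhds x) := by
    simpa using ((continuous_mul_const x).tendsto 1).mono_left nhdsWithin_le_nhds
  refine le_of_tendsto hlim ?_
  filter_upwards [Ioo_mem_nhdsLT zero_lt_one] with t ht using h t ht.1.le ht.2

lemma sum_sum_le_sum_of_pairwise_disjoint {ι α : Type*} [Fintype ι] [Fintype α] [DecidableEq α]
    {Y : ι → Finset α} (hY : Pairwise (Disjoint on Y)) {c : α → ℝ} (hc : 0 ≤ c) :
    ∑ i, ∑ j ∈ Y i, c j ≤ ∑ j, c j := by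
  rw [← sum_biUnion fun i _ i' _ h => hY h]
  exact sum_le_univ_sum_of_nonneg hc

section Mechanism

variable {n m : ℕ} {M : Mechanism n m} {b : Fin n → Finset (Fin m) → ℝ} {i : Fin n}
  {S : Finset (Fin m)}

noncomputable def externality (b : Fin n → Finset (Fin m) → ℝ) (i : Fin n)
    (S : Finset (Fin m)) : ℝ :=
  Wminus b i univ - Wminus b i (univ \ S)

lemma externality_update (w : Finset (Fin m) → ℝ) :
    externality (update b i w) i S = externality b i S := by
  simp only [externality, Wminus_update]

lemma externality_of_subsingleton [Subsingleton (Fin n)] : externality b i S = 0 := by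
  simp [externality, Wminus_of_subsingleton]

lemma InBidSpace.update {B : Set (Finset (Fin m) → ℝ)} (hb : InBidSpace B b) (i : Fin n)
    {w : Finset (Fin m) → ℝ} (hw : w ∈ B) : InBidSpace B (update b i w) := fun k => by
  rcases eq_or_ne k i with rfl | hk
  · simpa using hw
  · simpa [hk] using hb k

lemma InBidSpace.nonneg (hb : InBidSpace (GSvals m) b) (k : Fin n) (S : Finset (Fin m)) :
    0 ≤ b k S :=
  (hb k).1.nonneg S

lemma IsVCG.pay_eq {B : Set (Finset (Fin m) → ℝ)} (hVCG : IsVCG M B) (hb : InBidSpace B b)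
    (i : Fin n) : M.pay b i = externality b i (M.alloc b i) :=
  hVCG.2 b hb i

lemma IsVCG.subset_alloc_and_pay_le_of_additive (hVCG : IsVCG M (GSvals m))
    (hM : AllocDisjoint M (GSvals m)) (hb : InBidSpace (GSvals m) b) {H : ℝ}
    (hH : Wminus b i univ < H) (hbi : b i = addVal fun j => if j ∈ S then H else 0) :
    S ⊆ M.alloc b i ∧ M.pay b i ≤ externality b i S := by
  set A := M.alloc b i
  have key := add_Wminus_compl_le_of_maximal (hM b hb) (hVCG.1 b hb) i S
  have hval : ∀ R, b i R = #(R ∩ S) * H := fun R => by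
    rw [hbi, addVal, sum_ite_mem, sum_const, nsmul_eq_mul]
  rw [hval, hval, inter_self] at key
  have hA : Wminus b i (univ \ A) ≤ Wminus b i univ := Wminus_mono sdiff_subset
  have hS : 0 ≤ Wminus b i (univ \ S) := Wminus_nonneg hb.nonneg
  have hH₀ : 0 ≤ H := by linarith [Wminus_nonneg (b := b) (i := i) (S := univ) hb.nonneg]
  have hSA : S ⊆ A := by
    by_contra hSA
    have hlt : #(A ∩ S) + 1 ≤ #S :=
      card_lt_card (ssubset_of_subset_of_ne inter_subset_right (mt inter_eq_right.1 hSA))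
    have : ((#(A ∩ S) : ℝ) + 1) * H ≤ #S * H :=
      mul_le_mul_of_nonneg_right (by exact_mod_cast hlt) hH₀
    linarith
  rw [inter_eq_right.2 hSA] at key
  refine ⟨hSA, ?_⟩
  rw [hVCG.pay_eq hb, externality, externality]
  linarith

lemma IsNash.sub_externality_le_util {v : Fin n → Finset (Fin m) → ℝ}
    (hNash : IsNash M (GSvals m) v b) (hVCG : IsVCG M (GSvals m))
    (hM : AllocDisjoint M (GSvals m)) (hvi : Monotone (v i)) (S : Finset (Fin m)) :
    v i S - externality b i S ≤ util M (v i) i b := by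
  set H := Wminus b i univ + 1
  have hH : 0 ≤ H := by linarith [Wminus_nonneg (b := b) (i := i) (S := univ) hNash.1.nonneg]
  have hw : IsGS (addVal fun j => if j ∈ S then H else 0) :=
    isGS_addVal fun j => by dsimp only; split_ifs <;> simp [hH]
  obtain ⟨hSA, hpay⟩ := hVCG.subset_alloc_and_pay_le_of_additive hM (hNash.1.update i hw)
    (by rw [Wminus_update]; linarith) (update_self ..)
  rw [externality_update] at hpay
  have hdev := hNash.2 i _ hw
  unfold util at hdev ⊢
  linarith [hvi hSA]

lemma Wminus_eq_sum_of_additive_rival {c : Fin n → Finset (Fin m) → ℝ} {k l : Fin n}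
    (hlk : l ≠ k) {q : Fin m → ℝ} (hq : 0 ≤ q) (hcl : c l = addVal q)
    (hc : ∀ k', k' ≠ k → k' ≠ l → c k' = 0) (G : Finset (Fin m)) :
    Wminus c k G = ∑ j ∈ G, q j := by
  have hsum : ∀ Y : Fin n → Finset (Fin m),
      ∑ k' ∈ univ.erase k, c k' (Y k') = ∑ j ∈ Y l, q j :=
    fun Y => by
      rw [sum_eq_single_of_mem l (mem_erase.2 ⟨hlk, mem_univ l⟩) fun k' hk' hk'l => by
        rw [hc k' (ne_of_mem_erase hk') hk'l, Pi.zero_apply], hcl, addVal]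
  refine le_antisymm (Wminus_le fun Y _ hY => ?_) ?_
  · rw [hsum]
    exact sum_le_sum_of_subset_of_nonneg (hY l) fun j _ _ => hq j
  · have hY : Pairwise (Disjoint on update (fun _ => ∅) l G) := fun a a' h => by
      simp only [onFun, update_apply]
      split_ifs with ha ha' <;> simp_all
    simpa [hsum] using le_Wminus (b := c) (i := k) hY fun k' _ => by
      simp only [update_apply]
      split_ifs <;> simp

lemma IsVCG.inDemand_alloc_and_pay_eq (hVCG : IsVCG M (GSvals m))
    (hM : AllocDisjoint M (GSvals m)) {c : Fin n → Finset (Fin m) → ℝ}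
    (hc : InBidSpace (GSvals m) c) {k : Fin n} {q : Fin m → ℝ}
    (hW : ∀ G, Wminus c k G = ∑ j ∈ G, q j) :
    InDemand (c k) q (M.alloc c k) ∧ M.pay c k = ∑ j ∈ M.alloc c k, q j := by
  have hcompl : ∀ R : Finset (Fin m), ∑ j ∈ univ \ R, q j = ∑ j, q j - ∑ j ∈ R, q j :=
    fun R => sum_sdiff_eq_sub (subset_univ R)
  refine ⟨fun T => ?_, ?_⟩
  · have := add_Wminus_compl_le_of_maximal (hM c hc) (hVCG.1 c hc) k T
    rw [hW, hW, hcompl, hcompl] at this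
    linarith
  · rw [hVCG.pay_eq hc, externality, hW, hW, hcompl]
    ring

variable {γ : ℝ} {k : Fin n} {vk bk : Finset (Fin m) → ℝ}

lemma HasExposureFactor.mul_sum_price_le [Nontrivial (Fin n)]
    (hexp : HasExposureFactor M (GSvals m) vk k bk γ) (hVCG : IsVCG M (GSvals m))
    (hM : AllocDisjoint M (GSvals m)) (hγ : 0 ≤ γ) (hvk : Monotone vk) (hbk : IsGS bk)
    {p : Fin m → ℝ} (hp : 0 ≤ p)
    {T : Finset (Fin m)} (hT : InDemand bk p T) {t : ℝ} (ht₀ : 0 ≤ t) (ht₁ : t < 1) :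
    t * ∑ j ∈ T, p j ≤ (1 + γ) * vk T := by
  -- a rival bids `t • p` on `T` and a prohibitive price elsewhere; as `t < 1`, the bundle
  -- `A ⊆ T` that VCG then serves to `k` costs at least as much as `T` at prices `p`
  obtain ⟨l, hlk⟩ := exists_ne k
  set q : Fin m → ℝ := fun j => if j ∈ T then t * p j else bk univ + 1
  have hq : 0 ≤ q := fun j => by
    simp only [q, Pi.zero_apply]
    split_ifs
    · exact mul_nonneg ht₀ (hp j)
    · linarith [hbk.1.nonneg univ]
  set c := update (update (0 : Fin n → Finset (Fin m) → ℝ) l (addVal q)) k bk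
  have hc : InBidSpace (GSvals m) c :=
    InBidSpace.update (InBidSpace.update (fun _ => isGS_zero) l (isGS_addVal hq)) k hbk
  have hck : c k = bk := update_self ..
  obtain ⟨hA, hpay⟩ := hVCG.inDemand_alloc_and_pay_eq hM hc
    (Wminus_eq_sum_of_additive_rival hlk hq (by simp [c, hlk]) fun k' h₁ h₂ => by
      simp [c, h₁, h₂])
  rw [hck] at hA
  set A := M.alloc c k
  have hAT : A ⊆ T := hA.subset_of_lt_price hbk.1 fun j hj => by simp [q, hj]
  have hqp : ∀ R ⊆ T, ∑ j ∈ R, q j = t * ∑ j ∈ R, p j := fun R hR => by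
    rw [mul_sum]
    exact sum_congr rfl fun j hj => if_pos (hR hj)
  have hAq := hA T
  rw [hqp A hAT, hqp T subset_rfl] at hAq
  have hpAT : ∑ j ∈ T, p j ≤ ∑ j ∈ A, p j := by nlinarith [hT A]
  calc t * ∑ j ∈ T, p j ≤ t * ∑ j ∈ A, p j := mul_le_mul_of_nonneg_left hpAT ht₀
    _ = M.pay c k := by rw [hpay, hqp A hAT]
    _ ≤ (1 + γ) * vk A := hexp c hc hck
    _ ≤ (1 + γ) * vk T := mul_le_mul_of_nonneg_left (hvk hAT) (by linarith)

lemma HasExposureFactor.sum_marginal_le [Nontrivial (Fin n)]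
    (hexp : HasExposureFactor M (GSvals m) vk k bk γ) (hVCG : IsVCG M (GSvals m))
    (hM : AllocDisjoint M (GSvals m)) (hγ : 0 ≤ γ) (hvk : Monotone vk) (hbk : IsGS bk)
    (A : Finset (Fin m)) :
    ∑ j ∈ A, (bk A - bk (A.erase j)) ≤ (1 + γ) * vk A := by
  have hp : 0 ≤ fun j => if j ∈ A then bk A - bk (A.erase j) else bk univ + 1 := fun j => by
    simp only [Pi.zero_apply]
    split_ifs
    · exact sub_nonneg.2 (hbk.1.monotone (erase_subset j A))
    · linarith [hbk.1.nonneg univ]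
  have h := le_of_forall_lt_one_mul_le_real fun t ht₀ ht₁ =>
    hexp.mul_sum_price_le hVCG hM hγ hvk hbk hp (hbk.inDemand_marginalPrice A) ht₀ ht₁
  rwa [sum_congr rfl fun j hj => if_pos hj] at h

end Mechanism

section RemovalLoss

variable {n m : ℕ} {b : Fin n → Finset (Fin m) → ℝ} {X : Fin n → Finset (Fin m)}

def removalLoss (b : Fin n → Finset (Fin m) → ℝ) (X : Fin n → Finset (Fin m)) (j : Fin m) :
    ℝ :=
  ∑ k, (b k (X k) - b k ((X k).erase j))

lemma removalLoss_nonneg (hb : ∀ k, Monotone (b k)) (j : Fin m) : 0 ≤ removalLoss b X j :=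
  sum_nonneg fun k _ => sub_nonneg.2 (hb k (erase_subset j _))

lemma sum_removalLoss (b : Fin n → Finset (Fin m) → ℝ) (X : Fin n → Finset (Fin m)) :
    ∑ j, removalLoss b X j = ∑ k, ∑ j ∈ X k, (b k (X k) - b k ((X k).erase j)) := by
  simp only [removalLoss]
  rw [sum_comm]
  exact sum_congr rfl fun k _ =>
    (sum_subset (subset_univ _) fun j _ hj => by simp [erase_eq_of_notMem hj]).symm

lemma externality_insert_sub_le_removalLoss (hb : ∀ k, Monotone (b k))
    (hX : Pairwise (Disjoint on X)) (hmax : ∑ k, b k (X k) = W b univ) (i : Fin n) (j : Fin m) :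
    externality b i (insert j (X i)) - externality b i (X i) ≤ removalLoss b X j := by
  have hle : ∑ k ∈ univ.erase i, b k ((X k).erase j) ≤ Wminus b i (univ \ insert j (X i)) :=
    le_Wminus (fun k l hkl => (hX hkl).mono (erase_subset j _) (erase_subset j _))
      fun k hk x hx => by
        simp only [mem_sdiff, mem_univ, mem_insert, not_or, true_and]
        exact ⟨ne_of_mem_erase hx, disjoint_left.1 (hX hk) (mem_of_mem_erase hx)⟩
  have hi : 0 ≤ b i (X i) - b i ((X i).erase j) := sub_nonneg.2 (hb i (erase_subset j _))
  rw [externality, externality, Wminus_compl_eq_of_maximal hX hmax, removalLoss,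
    ← add_sum_erase _ _ (mem_univ i), sum_sub_distrib]
  linarith

end RemovalLoss

section Equilibrium

variable {n m : ℕ} {M : Mechanism n m} {v b : Fin n → Finset (Fin m) → ℝ} {i : Fin n}

lemma IsNash.le_add_sum_removalLoss (hNash : IsNash M (GSvals m) v b)
    (hVCG : IsVCG M (GSvals m)) (hM : AllocDisjoint M (GSvals m)) (hvi : IsGS (v i))
    (S : Finset (Fin m)) :
    v i S ≤ v i (M.alloc b i) + ∑ j ∈ S \ M.alloc b i, removalLoss b (M.alloc b) j := by
  set X := M.alloc b
  have hmarg : ∀ j, v i (insert j (X i)) - v i (X i) ≤ removalLoss b X j := fun j => by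
    have hdev := hNash.sub_externality_le_util hVCG hM hvi.1.monotone (insert j (X i))
    have hext := externality_insert_sub_le_removalLoss (fun k => (hNash.1 k).1.monotone)
      (hM b hNash.1) (hVCG.1 b hNash.1) i j
    rw [util, hVCG.pay_eq hNash.1] at hdev
    linarith
  calc v i S ≤ v i (X i ∪ S) := hvi.1.monotone subset_union_right
    _ ≤ v i (X i) + ∑ j ∈ S \ X i, (v i (insert j (X i)) - v i (X i)) :=
      hvi.le_add_sum_marginal _ _
    _ ≤ v i (X i) + ∑ j ∈ S \ X i, removalLoss b X j :=
      add_le_add le_rfl (sum_le_sum fun j _ => hmarg j)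

lemma IsNash.le_value_alloc_of_subsingleton [Subsingleton (Fin n)]
    (hNash : IsNash M (GSvals m) v b) (hVCG : IsVCG M (GSvals m))
    (hM : AllocDisjoint M (GSvals m)) (hvi : Monotone (v i)) (S : Finset (Fin m)) :
    v i S ≤ v i (M.alloc b i) := by
  have hdev := hNash.sub_externality_le_util hVCG hM hvi S
  rwa [util, hVCG.pay_eq hNash.1, externality_of_subsingleton, externality_of_subsingleton,
    sub_zero, sub_zero] at hdev

end Equilibrium

/-- PoA_γ ≤ 2 + γ for the VCG mechanism with GS valuations and bids. -/
theorem stmt4 {n m : ℕ} (M : Mechanism n m)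
    (hM : AllocDisjoint M (GSvals m)) (hVCG : IsVCG M (GSvals m))
    (γ : ℝ) (hγ : 0 ≤ γ)
    (v : Fin n → Finset (Fin m) → ℝ) (hv : ∀ i, IsGS (v i))
    (b : Fin n → Finset (Fin m) → ℝ) (hNash : IsNash M (GSvals m) v b)
    (hexp : ∀ i : Fin n, HasExposureFactor M (GSvals m) (v i) i (b i) γ) :
    OPT v ≤ (2 + γ) * ∑ i, v i (M.alloc b i) := by
  obtain ⟨Y, hY, -, hOPT⟩ := exists_W v univ
  set X := M.alloc b
  have hSW : 0 ≤ ∑ i, v i (X i) := sum_nonneg fun i _ => (hv i).1.nonneg _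
  rw [OPT, hOPT]
  rcases subsingleton_or_nontrivial (Fin n) with _ | _
  · calc ∑ i, v i (Y i) ≤ ∑ i, v i (X i) := sum_le_sum fun i _ =>
          hNash.le_value_alloc_of_subsingleton hVCG hM (hv i).1.monotone _
      _ ≤ (2 + γ) * ∑ i, v i (X i) := by nlinarith
  · have hloss := removalLoss_nonneg (X := X) fun k => (hNash.1 k).1.monotone
    calc ∑ i, v i (Y i)
        ≤ ∑ i, (v i (X i) + ∑ j ∈ Y i \ X i, removalLoss b X j) :=
          sum_le_sum fun i _ => hNash.le_add_sum_removalLoss hVCG hM (hv i) _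
      _ ≤ ∑ i, v i (X i) + ∑ j, removalLoss b X j := by
          rw [sum_add_distrib]
          exact add_le_add le_rfl (sum_sum_le_sum_of_pairwise_disjoint
            (fun i i' h => (hY h).mono sdiff_subset sdiff_subset) hloss)
      _ = ∑ i, v i (X i) + ∑ k, ∑ j ∈ X k, (b k (X k) - b k ((X k).erase j)) := by
          rw [sum_removalLoss]
      _ ≤ ∑ i, v i (X i) + ∑ k, (1 + γ) * v k (X k) :=
          add_le_add le_rfl (sum_le_sum fun k _ => (hexp k).sum_marginal_le hVCG hM hγ
            (hv k).1.monotone (hNash.1 k) _)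
      _ = (2 + γ) * ∑ i, v i (X i) := by rw [← mul_sum]; ring
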